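/- Let σ > 0 and Υ > 0. For s ∈ ℝ and 1 ≤ i ≤ n set λ^n_i(s) = s²/n + 4Υ sin²[(π/2)·(2i−1)/(2n+1)]. Let (h_n) be a sequence of real numbers converging to h ∈ ℝ, and define δ^n_i = λ^n_i(σ + n^{−1/4}h_n)/λ^n_i(σ) − 1 for 1 ≤ i ≤ n. Then sup_{1≤i≤n} |δ^n_i| → 0 and Σ_{i=1}^n (δ^n_i)² → h²/(σ√Υ) as n→∞. -/

import Mathlib

open Real Filter

/-- The eigenvalues of the covariance matrix of noisy Gaussian increments at volatility `s`. -/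
noncomputable def lamEig (Υ : ℝ) (n : ℕ) (i : ℕ) (s : ℝ) : ℝ :=
  s ^ 2 / n + 4 * Υ * Real.sin (π / 2 * ((2 * (i : ℝ) - 1) / (2 * (n : ℝ) + 1))) ^ 2

open MeasureTheory Set Topology

/-!
Writing `ε = n^{-1/4}` and `D_i = n λ^n_i(σ) = σ² + 4Υ n sin² θ_i`, one has
`δ^n_i = ε (2σ h_n + ε h_n²) / D_i`, and `D_i ≥ σ²` gives the uniform bound.
Then `Σ (δ^n_i)² = (2σ h_n + ε h_n²)² · n^{-1/2} Σ D_i⁻²` is a Riemann sum of mesh `n^{-1/2}`: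
since `√n sin θ_i ≈ (π/2) (i/√n)`, the step function `u ↦ D_{⌈u√n⌉}⁻²` converges pointwise to
`(σ² + π²Υ u²)⁻²`, and Jordan's inequality `sin x ≥ 2x/π` dominates it by `(σ² + 4Υu²/9)⁻²`.
Dominated convergence and `∫₀^∞ (σ² + b²u²)⁻² du = π / (4σ³b)` give the limit
`4σ²h² / (4σ³√Υ) = h²/(σ√Υ)`.
-/

lemma hasDerivAt_primitive_inv_sq_add_sq_sq {σ b : ℝ} (hσ : 0 < σ) (hb : 0 < b) (u : ℝ) :
    HasDerivAt (fun u => u / (2 * σ ^ 2 * (σ ^ 2 + (b * u) ^ 2))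
      + arctan (b * u / σ) / (2 * σ ^ 3 * b)) ((σ ^ 2 + (b * u) ^ 2) ^ 2)⁻¹ u := by
  have hD : HasDerivAt (fun u => 2 * σ ^ 2 * (σ ^ 2 + (b * u) ^ 2))
      (2 * σ ^ 2 * (2 * (b * u) * b)) u := by
    simpa using ((((hasDerivAt_id u).const_mul b).pow 2).const_add (σ ^ 2)).const_mul (2 * σ ^ 2)
  have harg : HasDerivAt (fun u => b * u / σ) (b / σ) u := by
    simpa using ((hasDerivAt_id u).const_mul b).div_const σ
  refine (((hasDerivAt_id' u).div hD (by positivity)).add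
    (((hasDerivAt_arctan _).comp u harg).div_const (2 * σ ^ 3 * b))).congr_deriv ?_
  have : 1 + (b * u / σ) ^ 2 ≠ 0 := by positivity
  field_simp
  ring

lemma tendsto_div_sq_add_sq_atTop {σ b : ℝ} (hb : b ≠ 0) :
    Tendsto (fun u => u / (σ ^ 2 + (b * u) ^ 2)) atTop (𝓝 0) := by
  have h0 : Tendsto (fun t : ℝ => t / (σ ^ 2 * t ^ 2 + b ^ 2)) (𝓝 0) (𝓝 0) := by
    have : ContinuousAt (fun t : ℝ => t / (σ ^ 2 * t ^ 2 + b ^ 2)) 0 :=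
      continuousAt_id.div (by fun_prop) (by simpa using hb)
    simpa using this.tendsto
  refine (h0.comp tendsto_inv_atTop_zero).congr' ?_
  filter_upwards [eventually_gt_atTop 0] with u hu
  simp only [Function.comp_apply]
  field_simp

lemma integral_Ioi_inv_sq_add_sq_sq {σ b : ℝ} (hσ : 0 < σ) (hb : 0 < b) :
    IntegrableOn (fun u => ((σ ^ 2 + (b * u) ^ 2) ^ 2)⁻¹) (Ioi 0) ∧
    ∫ u in Ioi 0, ((σ ^ 2 + (b * u) ^ 2) ^ 2)⁻¹ = π / (4 * σ ^ 3 * b) := by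
  have hlim : Tendsto (fun u => u / (2 * σ ^ 2 * (σ ^ 2 + (b * u) ^ 2))
      + arctan (b * u / σ) / (2 * σ ^ 3 * b)) atTop
      (𝓝 (0 / (2 * σ ^ 2) + π / 2 / (2 * σ ^ 3 * b))) := by
    refine Tendsto.add ?_ ?_
    · refine ((tendsto_div_sq_add_sq_atTop (σ := σ) hb.ne').div_const (2 * σ ^ 2)).congr
        fun u => ?_
      field_simp
    · exact ((tendsto_arctan_atTop.mono_right nhdsWithin_le_nhds).comp
        ((tendsto_id.const_mul_atTop hb).atTop_div_const hσ)).div_const _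
  have hderiv := fun u (_ : u ∈ Ici (0 : ℝ)) => hasDerivAt_primitive_inv_sq_add_sq_sq hσ hb u
  have hnonneg : ∀ u ∈ Ioi (0 : ℝ), 0 ≤ ((σ ^ 2 + (b * u) ^ 2) ^ 2)⁻¹ := fun u _ => by positivity
  refine ⟨integrableOn_Ioi_deriv_of_nonneg' hderiv hnonneg hlim, ?_⟩
  rw [integral_Ioi_of_hasDerivAt_of_nonneg' hderiv hnonneg hlim]
  simp only [mul_zero, zero_div, arctan_zero]
  field_simp
  ring

noncomputable def riemannStep (r : ℝ) (n : ℕ) (a : ℕ → ℝ) (u : ℝ) : ℝ :=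
  ∑ i ∈ Finset.Icc 1 n, (Ioc (((i : ℝ) - 1) / r) (i / r)).indicator (fun _ => a i) u

section RiemannStep

variable {r : ℝ} {n : ℕ} {a : ℕ → ℝ}

lemma integral_riemannStep (hr : 0 < r) :
    ∫ u in Ioi 0, riemannStep r n a u = ∑ i ∈ Finset.Icc 1 n, r⁻¹ * a i := by
  have hint (i : ℕ) : IntegrableOn ((Ioc (((i : ℝ) - 1) / r) (i / r)).indicator fun _ => a i)
      (Ioi 0) :=
    ((integrableOn_const measure_Ioc_lt_top.ne).integrable_indicator measurableSet_Ioc).integrableOn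
  unfold riemannStep
  rw [integral_finsetSum _ fun i _ => hint i]
  refine Finset.sum_congr rfl fun i hi => ?_
  have hi : (1 : ℝ) ≤ i := by exact_mod_cast (Finset.mem_Icc.1 hi).1
  have hsub : Ioc (((i : ℝ) - 1) / r) (i / r) ⊆ Ioi 0 :=
    fun u hu => lt_of_le_of_lt (div_nonneg (by linarith) hr.le) hu.1
  have hlen : (i : ℝ) / r - (i - 1) / r = r⁻¹ := by rw [← sub_div, sub_sub_cancel, one_div]
  rw [setIntegral_indicator measurableSet_Ioc, inter_eq_right.2 hsub, setIntegral_const,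
    measureReal_def, volume_Ioc, hlen, ENNReal.toReal_ofReal (by positivity), smul_eq_mul]

lemma mem_Ioc_div_iff_ceil_eq {i : ℕ} (hi : i ≠ 0) (hr : 0 < r) {u : ℝ} :
    u ∈ Ioc (((i : ℝ) - 1) / r) (i / r) ↔ ⌈u * r⌉₊ = i := by
  rw [mem_Ioc, div_lt_iff₀ hr, le_div_iff₀ hr, Nat.ceil_eq_iff hi, Nat.cast_sub (by omega),
    Nat.cast_one]

lemma riemannStep_of_pos (hr : 0 < r) {u : ℝ} (hu : 0 < u) :
    riemannStep r n a u = if ⌈u * r⌉₊ ≤ n then a ⌈u * r⌉₊ else 0 := by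
  have hceil : 1 ≤ ⌈u * r⌉₊ := Nat.one_le_ceil_iff.2 (mul_pos hu hr)
  have hterm : ∀ i ∈ Finset.Icc 1 n, (Ioc (((i : ℝ) - 1) / r) (i / r)).indicator (fun _ => a i) u
      = if ⌈u * r⌉₊ = i then a i else 0 := fun i hi => by
    simp only [indicator_apply, mem_Ioc_div_iff_ceil_eq (i := i) (by grind) hr]
  rw [riemannStep, Finset.sum_congr rfl hterm, Finset.sum_ite_eq]
  simp only [Finset.mem_Icc, hceil, true_and]

end RiemannStep

lemma tendsto_riemannSum_of_dominated {r : ℕ → ℝ} {a : ℕ → ℕ → ℝ} {f g : ℝ → ℝ}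
    (hr : ∀ᶠ n in atTop, 0 < r n) (hg : IntegrableOn g (Ioi 0))
    (hbound : ∀ᶠ n in atTop, ∀ u > 0, ‖riemannStep (r n) n (a n) u‖ ≤ g u)
    (hlim : ∀ u > 0, Tendsto (fun n => riemannStep (r n) n (a n) u) atTop (𝓝 (f u))) :
    Tendsto (fun n => ∑ i ∈ Finset.Icc 1 n, (r n)⁻¹ * a n i) atTop
      (𝓝 (∫ u in Ioi 0, f u)) := by
  have hmeas : ∀ n, AEStronglyMeasurable (riemannStep (r n) n (a n)) (volume.restrict (Ioi 0)) :=
    fun n => (Finset.measurable_sum _ fun i _ =>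
      measurable_const.indicator measurableSet_Ioc).aestronglyMeasurable
  refine (tendsto_integral_filter_of_dominated_convergence g (.of_forall hmeas) ?_ hg
    ((ae_restrict_iff' measurableSet_Ioi).2 (.of_forall hlim))).congr' ?_
  · exact hbound.mono fun n hn => (ae_restrict_iff' measurableSet_Ioi).2 (.of_forall hn)
  · exact hr.mono fun n hn => integral_riemannStep hn

noncomputable def eigAngle (n i : ℕ) : ℝ := π / 2 * ((2 * (i : ℝ) - 1) / (2 * (n : ℝ) + 1))

/-- `n * lamEig Υ n i s` -/
noncomputable def scaledEig (Υ : ℝ) (n i : ℕ) (s : ℝ) : ℝ :=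
  s ^ 2 + 4 * Υ * n * sin (eigAngle n i) ^ 2

section Eigenvalues

variable {Υ s σ : ℝ} {n i : ℕ}

lemma sq_le_scaledEig (hΥ : 0 ≤ Υ) : s ^ 2 ≤ scaledEig Υ n i s :=
  le_add_of_nonneg_right (by positivity)

lemma scaledEig_pos (hΥ : 0 ≤ Υ) (hs : s ≠ 0) : 0 < scaledEig Υ n i s :=
  (by positivity : 0 < s ^ 2).trans_le (sq_le_scaledEig hΥ)

lemma lamEig_div_lamEig_sub_one (hn : n ≠ 0) (hσ : scaledEig Υ n i σ ≠ 0) :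
    lamEig Υ n i s / lamEig Υ n i σ - 1 = (s ^ 2 - σ ^ 2) / scaledEig Υ n i σ := by
  have hlam (t : ℝ) : lamEig Υ n i t = scaledEig Υ n i t / n := by
    rw [lamEig, scaledEig, eigAngle]
    field_simp
  rw [hlam, hlam, div_div_div_cancel_right₀ (Nat.cast_ne_zero.2 hn), div_sub_one hσ]
  simp only [scaledEig]
  ring

lemma div_three_mul_le_sin_eigAngle (hi : 1 ≤ i) (hin : i ≤ n) :
    (i : ℝ) / (3 * n) ≤ sin (eigAngle n i) := by
  have hi' : (1 : ℝ) ≤ i := by exact_mod_cast hi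
  have hin' : (i : ℝ) ≤ n := by exact_mod_cast hin
  have hfrac : (2 * (i : ℝ) - 1) / (2 * n + 1) ≤ 1 := by rw [div_le_one (by linarith)]; linarith
  have hjordan := mul_le_sin (x := eigAngle n i)
    (mul_nonneg pi_div_two_pos.le (div_nonneg (by linarith) (by linarith)))
    (mul_le_of_le_one_right pi_div_two_pos.le hfrac)
  calc (i : ℝ) / (3 * n) ≤ (2 * (i : ℝ) - 1) / (2 * n + 1) := by
        rw [div_le_div_iff₀ (by linarith) (by linarith)]; nlinarith
    _ = 2 / π * eigAngle n i := by unfold eigAngle; field_simp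
    _ ≤ sin (eigAngle n i) := hjordan

lemma add_sq_le_scaledEig (hΥ : 0 ≤ Υ) (hi : 1 ≤ i) (hin : i ≤ n) {u : ℝ} (hu : 0 ≤ u)
    (hui : u * √n ≤ i) : s ^ 2 + (2 * √Υ / 3 * u) ^ 2 ≤ scaledEig Υ n i s := by
  have hn : (0 : ℝ) < n := by exact_mod_cast hi.trans hin
  have hsin := div_three_mul_le_sin_eigAngle hi hin
  have hu2 : u ^ 2 * n ≤ (i : ℝ) ^ 2 := by
    calc u ^ 2 * n = (u * √n) ^ 2 := by rw [mul_pow, sq_sqrt hn.le]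
      _ ≤ (i : ℝ) ^ 2 := pow_le_pow_left₀ (by positivity) hui 2
  have hsq : (i : ℝ) ^ 2 ≤ (3 * n * sin (eigAngle n i)) ^ 2 :=
    pow_le_pow_left₀ (by positivity) (by rwa [div_le_iff₀ (by positivity), mul_comm] at hsin) 2
  have : u ^ 2 ≤ 9 * n * sin (eigAngle n i) ^ 2 := by
    rw [← mul_le_mul_iff_left₀ hn]; nlinarith
  rw [scaledEig, mul_pow, div_pow, mul_pow, sq_sqrt hΥ]
  nlinarith

lemma mul_sinc (x : ℝ) : x * sinc x = sin x := by
  rcases eq_or_ne x 0 with rfl | hx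
  · simp
  · rw [sinc_of_ne_zero hx, mul_div_cancel₀ _ hx]

lemma tendsto_sqrt_natCast_atTop : Tendsto (fun n : ℕ => √(n : ℝ)) atTop atTop :=
  tendsto_sqrt_atTop.comp tendsto_natCast_atTop_atTop

lemma tendsto_sqrt_mul_eigAngle {i : ℕ → ℕ} {u : ℝ}
    (hi : Tendsto (fun n : ℕ => (i n : ℝ) / √n) atTop (𝓝 u)) :
    Tendsto (fun n : ℕ => √n * eigAngle n (i n)) atTop (𝓝 (π / 2 * u)) := by
  have hhalf : Tendsto (fun n : ℕ => (n : ℝ) / (2 * n + 1)) atTop (𝓝 (1 / 2)) := by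
    refine ((tendsto_natCast_div_add_atTop (1 / 2 : ℝ)).div_const 2).congr fun n => ?_
    field_simp
  have hlim := (((hi.const_mul 2).sub tendsto_sqrt_natCast_atTop.inv_tendsto_atTop).mul
    hhalf).const_mul (π / 2)
  rw [sub_zero, mul_one_div, mul_div_cancel_left₀ _ two_ne_zero] at hlim
  refine hlim.congr' ?_
  filter_upwards [eventually_ne_atTop 0] with n hn
  have hs : √(n : ℝ) ≠ 0 := by positivity
  have hsq : √(n : ℝ) ^ 2 = n := sq_sqrt (Nat.cast_nonneg n)
  simp only [eigAngle, Pi.inv_apply]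
  field_simp
  rw [hsq]
  ring

lemma tendsto_sqrt_mul_sin_eigAngle {i : ℕ → ℕ} {u : ℝ}
    (hi : Tendsto (fun n : ℕ => (i n : ℝ) / √n) atTop (𝓝 u)) :
    Tendsto (fun n : ℕ => √n * sin (eigAngle n (i n))) atTop (𝓝 (π / 2 * u)) := by
  have hθ := tendsto_sqrt_mul_eigAngle hi
  have hθ0 : Tendsto (fun n => eigAngle n (i n)) atTop (𝓝 0) := by
    have := tendsto_sqrt_natCast_atTop.inv_tendsto_atTop.mul hθ
    rw [zero_mul] at this
    refine this.congr' ?_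
    filter_upwards [eventually_ne_atTop 0] with n hn
    have hs : √(n : ℝ) ≠ 0 := by positivity
    simp [hs]
  have hsinc := (continuous_sinc.tendsto 0).comp hθ0
  rw [sinc_zero] at hsinc
  simpa only [mul_one, mul_assoc, Function.comp_apply, mul_sinc] using hθ.mul hsinc

lemma tendsto_scaledEig_ceil (hΥ : 0 ≤ Υ) {u : ℝ} (hu : 0 < u) :
    Tendsto (fun n : ℕ => scaledEig Υ n ⌈u * √n⌉₊ s) atTop
      (𝓝 (s ^ 2 + (π * √Υ * u) ^ 2)) := by
  have hceil : Tendsto (fun n : ℕ => (⌈u * √n⌉₊ : ℝ) / √n) atTop (𝓝 u) := by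
    have h := (tendsto_nat_ceil_div_atTop.comp
      (tendsto_sqrt_natCast_atTop.const_mul_atTop hu)).const_mul u
    rw [mul_one] at h
    refine h.congr' ?_
    filter_upwards [eventually_ne_atTop 0] with n hn
    have hs : √(n : ℝ) ≠ 0 := by positivity
    simp only [Function.comp_apply]
    field_simp
  have h := ((tendsto_sqrt_mul_sin_eigAngle hceil).pow 2).const_mul (4 * Υ) |>.const_add (s ^ 2)
  convert h using 2 with n
  · rw [scaledEig, mul_pow, sq_sqrt (Nat.cast_nonneg n)]
    ring
  · rw [mul_pow, mul_pow, sq_sqrt hΥ]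
    ring

lemma tendsto_sum_inv_sq_scaledEig (hσ : 0 < σ) (hΥ : 0 < Υ) :
    Tendsto (fun n : ℕ => ∑ i ∈ Finset.Icc 1 n, (√n)⁻¹ * (scaledEig Υ n i σ ^ 2)⁻¹) atTop
      (𝓝 (1 / (4 * σ ^ 3 * √Υ))) := by
  obtain ⟨hdom, -⟩ := integral_Ioi_inv_sq_add_sq_sq hσ (b := 2 * √Υ / 3) (by positivity)
  obtain ⟨-, hval⟩ := integral_Ioi_inv_sq_add_sq_sq hσ (b := π * √Υ) (by positivity)
  have hr : ∀ᶠ n : ℕ in atTop, 0 < √(n : ℝ) :=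
    (eventually_ne_atTop 0).mono fun n hn => by positivity
  convert tendsto_riemannSum_of_dominated hr hdom ?_ fun u hu => ?_ using 2
  · rw [hval]
    field_simp
  · filter_upwards [hr] with n hn u hu
    rw [riemannStep_of_pos hn hu]
    split_ifs with hle
    · have hi : 1 ≤ ⌈u * √n⌉₊ := Nat.one_le_ceil_iff.2 (mul_pos hu hn)
      rw [norm_inv, norm_pow, Real.norm_of_nonneg (scaledEig_pos hΥ.le hσ.ne').le]
      exact inv_anti₀ (by positivity) (pow_le_pow_left₀ (by positivity)
        (add_sq_le_scaledEig hΥ.le hi hle hu.le (Nat.le_ceil _)) 2)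
    · rw [norm_zero]
      positivity
  · refine (((tendsto_scaledEig_ceil hΥ.le hu).pow 2).inv₀ (by positivity)).congr' ?_
    filter_upwards [hr, tendsto_sqrt_natCast_atTop.eventually_ge_atTop u] with n hn hun
    have hle : ⌈u * √n⌉₊ ≤ n := Nat.ceil_le.2 <| by
      calc u * √n ≤ √n * √n := by gcongr
        _ = n := mul_self_sqrt (Nat.cast_nonneg n)
    rw [riemannStep_of_pos hn hu, if_pos hle]

end Eigenvalues

lemma tendsto_biSup_abs_of_le {f : ℕ → ℕ → ℝ} {s : ℕ → Finset ℕ} {b : ℕ → ℝ}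
    (hb : Tendsto b atTop (𝓝 0)) (hf : ∀ᶠ n in atTop, ∀ i ∈ s n, |f n i| ≤ b n) :
    Tendsto (fun n => ⨆ i ∈ s n, |f n i|) atTop (𝓝 0) := by
  have hmax : Tendsto (fun n => max (b n) 0) atTop (𝓝 0) := by
    simpa using hb.max (tendsto_const_nhds (x := (0 : ℝ)))
  refine tendsto_of_tendsto_of_tendsto_of_le_of_le' tendsto_const_nhds hmax
    (.of_forall fun n => Real.iSup_nonneg fun i => Real.iSup_nonneg fun _ => abs_nonneg _) ?_
  filter_upwards [hf] with n hn
  exact Real.iSup_le (fun i => Real.iSup_le (fun hi => (hn i hi).trans (le_max_left _ _))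
    (le_max_right _ _)) (le_max_right _ _)

lemma rpow_neg_one_div_four_sq {x : ℝ} (hx : 0 ≤ x) : (x ^ (-(1 / 4) : ℝ)) ^ 2 = (√x)⁻¹ := by
  rw [← rpow_mul_natCast hx, sqrt_eq_rpow, ← rpow_neg hx]
  norm_num

/-- With `δ^n_i = λ^n_i(σ + n^{-1/4} h_n)/λ^n_i(σ) - 1` for a sequence `h_n → h`,
one has `sup_{1≤i≤n} |δ^n_i| → 0` and `Σ_{i=1}^n (δ^n_i)² → h²/(σ√Υ)` as `n → ∞`. -/
theorem stmt6 (σ Υ : ℝ) (hσ : 0 < σ) (hΥ : 0 < Υ)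
    (hseq : ℕ → ℝ) (h : ℝ) (hh : Tendsto hseq atTop (nhds h))
    (δ : ℕ → ℕ → ℝ)
    (hδ : ∀ n i, δ n i =
      lamEig Υ n i (σ + (n : ℝ) ^ (-(1 / 4) : ℝ) * hseq n) / lamEig Υ n i σ - 1) :
    Tendsto (fun n : ℕ => ⨆ i ∈ Finset.Icc 1 n, |δ n i|) atTop (nhds 0) ∧
    Tendsto (fun n : ℕ => ∑ i ∈ Finset.Icc 1 n, (δ n i) ^ 2) atTop
      (nhds (h ^ 2 / (σ * Real.sqrt Υ))) := by
  set ε : ℕ → ℝ := fun n => (n : ℝ) ^ (-(1 / 4) : ℝ)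
  set c : ℕ → ℝ := fun n => 2 * σ * hseq n + ε n * hseq n ^ 2
  have hε : Tendsto ε atTop (𝓝 0) :=
    (tendsto_rpow_neg_atTop (by norm_num)).comp tendsto_natCast_atTop_atTop
  have hc : Tendsto c atTop (𝓝 (2 * σ * h)) := by
    simpa using (hh.const_mul (2 * σ)).add (hε.mul (hh.pow 2))
  have hδc : ∀ᶠ n in atTop, ∀ i, δ n i = ε n * c n / scaledEig Υ n i σ := by
    filter_upwards [eventually_ne_atTop 0] with n hn i
    rw [hδ, lamEig_div_lamEig_sub_one hn (scaledEig_pos hΥ.le hσ.ne').ne']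
    ring
  constructor
  · refine tendsto_biSup_abs_of_le (b := fun n => ε n * |c n| / σ ^ 2)
      (by simpa using (hε.mul hc.abs).div_const (σ ^ 2)) ?_
    filter_upwards [hδc] with n hn i _
    rw [hn, abs_div, abs_mul, abs_of_nonneg (rpow_nonneg (Nat.cast_nonneg n) _),
      abs_of_pos (scaledEig_pos hΥ.le hσ.ne')]
    exact div_le_div_of_nonneg_left (by positivity) (by positivity) (sq_le_scaledEig hΥ.le)
  · convert ((hc.pow 2).mul (tendsto_sum_inv_sq_scaledEig hσ hΥ)).congr' ?_ using 2
    · field_simp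
      ring
    · filter_upwards [hδc] with n hn
      rw [Finset.mul_sum]
      refine Finset.sum_congr rfl fun i _ => ?_
      rw [hn, div_pow, mul_pow, rpow_neg_one_div_four_sq (Nat.cast_nonneg n)]
      ring
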